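/- Let F : ℝ^d → ℝ be differentiable with L-Lipschitz gradient, Ψ proper convex lsc, Φ = F + Ψ, η > 0. Given x ∈ dom Ψ, v ∈ ℝ^d, set x̃ = prox_Ψ^η(x − ηv) and x⁺ = x + γ(x̃ − x) for some γ ∈ [0,1]. Then Φ(x⁺) ≤ Φ(x) − (γ/η − Lγ²)‖x̃ − x‖² + (1/(2L))‖F'(x) − v‖². -/

import Mathlib

/-!
Three one-sided estimates add up. The Lipschitz gradient gives the quadratic upper bound
`F (x + h) ≤ F x + ⟪∇F x, h⟫ + L/2 ‖h‖²` along `h = γ (x̃ - x)`; convexity of `Ψ` bounds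
`Ψ x⁺` by `γ Ψ x̃ + (1 - γ) Ψ x`; and minimality of `x̃` for the `1/η`-strongly convex prox
objective gives `Ψ x̃ ≤ Ψ x - ⟪v, x̃ - x⟫ - ‖x̃ - x‖² / η`. The mismatch `⟪∇F x - v, h⟫` is
absorbed by Young's inequality. On its effective domain `Ψ` is replaced by the real convex
function `(Ψ ·).toReal`, so all the arithmetic happens in `ℝ`.
-/

open Set Filter Topology
open scoped RealInnerProductSpace

theorem le_of_forall_le_add_mul {A B K : ℝ} (h : ∀ t ∈ Ioc (0 : ℝ) 1, A ≤ B + t * K) : A ≤ B := by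
  have hlim : Tendsto (fun t : ℝ => B + t * K) (𝓝[>] 0) (𝓝 B) :=
    tendsto_nhdsWithin_of_tendsto_nhds (Continuous.tendsto' (by fun_prop) 0 B (by simp))
  exact ge_of_tendsto hlim (eventually_of_mem (Ioc_mem_nhdsGT zero_lt_one) h)

theorem Differentiable.apply_add_le_of_lipschitz_gradient {E : Type*} [NormedAddCommGroup E]
    [InnerProductSpace ℝ E] [CompleteSpace E] {F : E → ℝ} {L : ℝ} (hF : Differentiable ℝ F)
    (hFlip : ∀ a b, ‖gradient F a - gradient F b‖ ≤ L * ‖a - b‖) (x h : E) :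
    F (x + h) ≤ F x + ⟪gradient F x, h⟫ + L / 2 * ‖h‖ ^ 2 := by
  set φ : ℝ → ℝ := fun t => F (x + t • h) - t * ⟪gradient F x, h⟫ - L / 2 * t ^ 2 * ‖h‖ ^ 2
  have hφ' : ∀ t, HasDerivAt φ
      (⟪gradient F (x + t • h) - gradient F x, h⟫ - L * t * ‖h‖ ^ 2) t := by
    intro t
    have hline : HasDerivAt (fun t : ℝ => x + t • h) h t := by
      simpa using ((hasDerivAt_id t).smul_const h).const_add x
    have hFline := (hF (x + t • h)).hasGradientAt.hasFDerivAt.comp_hasDerivAt t hline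
    have hφ := ((hFline.sub ((hasDerivAt_id t).mul_const ⟪gradient F x, h⟫)).sub
      (((hasDerivAt_pow 2 t).const_mul (L / 2)).mul_const (‖h‖ ^ 2)))
    refine hφ.congr_deriv ?_
    rw [InnerProductSpace.toDual_apply_apply, inner_sub_left]
    push_cast
    ring
  have hφ'_nonpos : ∀ t ∈ interior (Ici (0 : ℝ)),
      ⟪gradient F (x + t • h) - gradient F x, h⟫ - L * t * ‖h‖ ^ 2 ≤ 0 := by
    intro t ht
    rw [interior_Ici] at ht
    have hinner : ⟪gradient F (x + t • h) - gradient F x, h⟫ ≤ L * t * ‖h‖ ^ 2 := calc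
      _ ≤ ‖gradient F (x + t • h) - gradient F x‖ * ‖h‖ := real_inner_le_norm _ _
      _ ≤ L * ‖x + t • h - x‖ * ‖h‖ := by gcongr; exact hFlip _ _
      _ = L * t * ‖h‖ ^ 2 := by
        rw [add_sub_cancel_left, norm_smul, Real.norm_of_nonneg ht.le]; ring
    linarith
  have hanti : AntitoneOn φ (Ici 0) :=
    antitoneOn_of_hasDerivWithinAt_nonpos (convex_Ici 0)
      (fun t _ => (hφ' t).continuousAt.continuousWithinAt)
      (fun t _ => (hφ' t).hasDerivWithinAt) hφ'_nonpos
  have hφ01 := hanti self_mem_Ici (mem_Ici.mpr zero_le_one) zero_le_one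
  simp only [φ, zero_smul, one_smul, add_zero, zero_mul, one_mul, sub_zero] at hφ01
  linarith

theorem real_inner_le_half_mul_norm_sq_add {E : Type*} [NormedAddCommGroup E]
    [InnerProductSpace ℝ E] {L : ℝ} (hL : 0 < L) (a b : E) :
    ⟪a, b⟫ ≤ L / 2 * ‖b‖ ^ 2 + 1 / (2 * L) * ‖a‖ ^ 2 := by
  have hsq : L / 2 * ‖b‖ ^ 2 + 1 / (2 * L) * ‖a‖ ^ 2 - ⟪a, b⟫ = ‖a - L • b‖ ^ 2 / (2 * L) := by
    rw [norm_sub_sq_real, real_inner_smul_right, norm_smul, Real.norm_of_nonneg hL.le]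
    field_simp
    ring
  rw [← sub_nonneg, hsq]
  positivity

section Prox

variable {E : Type*} [NormedAddCommGroup E] [InnerProductSpace ℝ E] {s : Set E} {ψ : E → ℝ}
  {η : ℝ} {u v x y : E}

theorem ConvexOn.le_add_inner_of_isMinOn_prox (hψ : ConvexOn ℝ s ψ) (hx : x ∈ s) (hy : y ∈ s)
    (hmin : IsMinOn (fun z => ψ z + 1 / (2 * η) * ‖z - u‖ ^ 2) s y) :
    ψ y ≤ ψ x + 1 / η * ⟪y - u, x - y⟫ := by
  -- compare `y` with `y + t • (x - y)` and let `t → 0⁺`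
  refine le_of_forall_le_add_mul (K := 1 / (2 * η) * ‖x - y‖ ^ 2) fun t ⟨ht0, ht1⟩ => ?_
  have hconv := hψ.2 hx hy ht0.le (sub_nonneg.2 ht1) (add_sub_cancel t 1)
  have hval := hmin (hψ.1 hx hy ht0.le (sub_nonneg.2 ht1) (add_sub_cancel t 1))
  have hsplit : t • x + (1 - t) • y - u = (y - u) + t • (x - y) := by module
  simp only [mem_ofPred_eq, hsplit, norm_add_sq_real, real_inner_smul_right, norm_smul,
    Real.norm_of_nonneg ht0.le, smul_eq_mul] at hconv hval
  have key : t * ψ y ≤ t * (ψ x + 1 / η * ⟪y - u, x - y⟫ + t * (1 / (2 * η) * ‖x - y‖ ^ 2)) := by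
    linear_combination hval + hconv
  exact le_of_mul_le_mul_left key ht0

theorem ConvexOn.le_of_isMinOn_prox_grad (hψ : ConvexOn ℝ s ψ) (hη : η ≠ 0) (hx : x ∈ s)
    (hy : y ∈ s) (hmin : IsMinOn (fun z => ψ z + 1 / (2 * η) * ‖z - (x - η • v)‖ ^ 2) s y) :
    ψ y ≤ ψ x - ⟪v, y - x⟫ - 1 / η * ‖y - x‖ ^ 2 := by
  have hinner : 1 / η * ⟪y - (x - η • v), x - y⟫ = -⟪v, y - x⟫ - 1 / η * ‖y - x‖ ^ 2 := by
    rw [show y - (x - η • v) = (y - x) + η • v by abel, show x - y = -(y - x) by abel,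
      inner_neg_right, inner_add_left, real_inner_smul_left, real_inner_self_eq_norm_sq,
      real_inner_comm]
    field_simp
    ring
  linarith [hψ.le_add_inner_of_isMinOn_prox hx hy hmin]

end Prox

theorem EReal.ne_top_of_add_coe_le {a b : EReal} {c d : ℝ} (h : a + c ≤ b + d) (hb : b ≠ ⊤) :
    a ≠ ⊤ := by
  rintro rfl
  rw [EReal.top_add_coe, top_le_iff] at h
  exact EReal.add_ne_top hb (EReal.coe_ne_top d) h

theorem isMinOn_toReal_add_of_ereal {α : Type*} {Ψ : α → EReal} (f : α → ℝ) {y : α}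
    (hmin : ∀ z, Ψ y + (f y : EReal) ≤ Ψ z + (f z : EReal)) (hbot : ∀ z, Ψ z ≠ ⊥)
    (hy : Ψ y ≠ ⊤) : IsMinOn (fun z => (Ψ z).toReal + f z) {z | Ψ z ≠ ⊤} y := by
  intro z hz
  have h := hmin z
  rwa [← EReal.coe_toReal hy (hbot y), ← EReal.coe_toReal hz (hbot z), ← EReal.coe_add,
    ← EReal.coe_add, EReal.coe_le_coe_iff] at h

section ERealConvex

variable {E : Type*} [AddCommGroup E] [Module ℝ E] {Ψ : E → EReal}

theorem apply_convex_combination_le_coe_toReal (hbot : ∀ z, Ψ z ≠ ⊥)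
    (hconv : ∀ (a b : E) (t : ℝ), 0 ≤ t → t ≤ 1 →
      Ψ (t • a + (1 - t) • b) ≤ (t : EReal) * Ψ a + ((1 - t : ℝ) : EReal) * Ψ b)
    {a b : E} (ha : Ψ a ≠ ⊤) (hb : Ψ b ≠ ⊤) {t : ℝ} (ht0 : 0 ≤ t) (ht1 : t ≤ 1) :
    Ψ (t • a + (1 - t) • b) ≤ ((t * (Ψ a).toReal + (1 - t) * (Ψ b).toReal : ℝ) : EReal) := by
  refine (hconv a b t ht0 ht1).trans_eq ?_
  rw [EReal.coe_add, EReal.coe_mul, EReal.coe_mul, EReal.coe_toReal ha (hbot a),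
    EReal.coe_toReal hb (hbot b)]

theorem convexOn_toReal_of_ereal (hbot : ∀ z, Ψ z ≠ ⊥)
    (hconv : ∀ (a b : E) (t : ℝ), 0 ≤ t → t ≤ 1 →
      Ψ (t • a + (1 - t) • b) ≤ (t : EReal) * Ψ a + ((1 - t : ℝ) : EReal) * Ψ b) :
    ConvexOn ℝ {z | Ψ z ≠ ⊤} (fun z => (Ψ z).toReal) := by
  have hle : ∀ a ∈ {z | Ψ z ≠ ⊤}, ∀ b ∈ {z | Ψ z ≠ ⊤}, ∀ t s : ℝ, 0 ≤ t → 0 ≤ s → t + s = 1 →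
      Ψ (t • a + s • b) ≤ ((t * (Ψ a).toReal + s * (Ψ b).toReal : ℝ) : EReal) := by
    intro a ha b hb t s ht hs hts
    obtain rfl : s = 1 - t := by linarith
    simpa using apply_convex_combination_le_coe_toReal hbot hconv ha hb ht (by linarith)
  refine ⟨fun a ha b hb t s ht hs hts => ?_, fun a ha b hb t s ht hs hts => ?_⟩
  · exact ne_top_of_le_ne_top (EReal.coe_ne_top _) (hle a ha b hb t s ht hs hts)
  · simpa only [smul_eq_mul, EReal.toReal_coe] using
      EReal.toReal_le_toReal (hle a ha b hb t s ht hs hts) (hbot _) (EReal.coe_ne_top _)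

end ERealConvex

theorem npag_descent_lemma_general (d : ℕ) (F : EuclideanSpace ℝ (Fin d) → ℝ)
    (Ψ : EuclideanSpace ℝ (Fin d) → EReal) (L η γ : ℝ)
    (hL : 0 < L) (hη : 0 < η) (hγ0 : 0 ≤ γ) (hγ1 : γ ≤ 1)
    (hF : Differentiable ℝ F)
    (hFlip : ∀ a b, ‖gradient F a - gradient F b‖ ≤ L * ‖a - b‖)
    (hne_bot : ∀ z, Ψ z ≠ ⊥)
    (hconv : ∀ (a b : EuclideanSpace ℝ (Fin d)) (t : ℝ), 0 ≤ t → t ≤ 1 →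
      Ψ (t • a + (1 - t) • b) ≤ (t : EReal) * Ψ a + ((1 - t : ℝ) : EReal) * Ψ b)
    (x v xt : EuclideanSpace ℝ (Fin d)) (hx : Ψ x ≠ ⊤)
    (hxt : ∀ z, Ψ xt + ((1 / (2 * η) * ‖xt - (x - η • v)‖ ^ 2 : ℝ) : EReal) ≤
                Ψ z + ((1 / (2 * η) * ‖z - (x - η • v)‖ ^ 2 : ℝ) : EReal)) :
    ((F (x + γ • (xt - x)) : ℝ) : EReal) + Ψ (x + γ • (xt - x)) ≤
      ((F x - (γ / η - L * γ ^ 2) * ‖xt - x‖ ^ 2 +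
          (1 / (2 * L)) * ‖gradient F x - v‖ ^ 2 : ℝ) : EReal) + Ψ x := by
  have hxt_dom : Ψ xt ≠ ⊤ := EReal.ne_top_of_add_coe_le (hxt x) hx
  have hprox := (convexOn_toReal_of_ereal hne_bot hconv).le_of_isMinOn_prox_grad hη.ne' hx
    hxt_dom (isMinOn_toReal_add_of_ereal _ hxt hne_bot hxt_dom)
  have hΨ : Ψ (x + γ • (xt - x)) ≤ ((γ * (Ψ xt).toReal + (1 - γ) * (Ψ x).toReal : ℝ) : EReal) := by
    rw [show x + γ • (xt - x) = γ • xt + (1 - γ) • x by module]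
    exact apply_convex_combination_le_coe_toReal hne_bot hconv hxt_dom hx hγ0 hγ1
  have hdescent := hF.apply_add_le_of_lipschitz_gradient hFlip x (γ • (xt - x))
  have hyoung := real_inner_le_half_mul_norm_sq_add hL (gradient F x - v) (γ • (xt - x))
  have hstep := mul_le_mul_of_nonneg_left hprox hγ0
  rw [real_inner_smul_right, norm_smul, Real.norm_of_nonneg hγ0] at hdescent hyoung
  rw [inner_sub_left] at hyoung
  refine (add_le_add le_rfl hΨ).trans ?_
  rw [← EReal.coe_toReal hx (hne_bot x), ← EReal.coe_add, ← EReal.coe_add, EReal.coe_le_coe_iff,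
    EReal.toReal_coe]
  linear_combination hdescent + hyoung + hstep

theorem npag_descent_lemma (d : ℕ) (F : EuclideanSpace ℝ (Fin d) → ℝ)
    (Ψ : EuclideanSpace ℝ (Fin d) → EReal) (L η γ : ℝ)
    (hL : 0 < L) (hη : 0 < η) (hγ0 : 0 ≤ γ) (hγ1 : γ ≤ 1)
    (hF : Differentiable ℝ F)
    (hFlip : ∀ a b, ‖gradient F a - gradient F b‖ ≤ L * ‖a - b‖)
    (hne_bot : ∀ z, Ψ z ≠ ⊥) (hne_top : ∃ z, Ψ z ≠ ⊤)
    (hconv : ∀ (a b : EuclideanSpace ℝ (Fin d)) (t : ℝ), 0 ≤ t → t ≤ 1 →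
      Ψ (t • a + (1 - t) • b) ≤ (t : EReal) * Ψ a + ((1 - t : ℝ) : EReal) * Ψ b)
    (hlsc : LowerSemicontinuous Ψ)
    (x v xt : EuclideanSpace ℝ (Fin d)) (hx : Ψ x ≠ ⊤)
    (hxt : ∀ z, Ψ xt + ((1 / (2 * η) * ‖xt - (x - η • v)‖ ^ 2 : ℝ) : EReal) ≤
                Ψ z + ((1 / (2 * η) * ‖z - (x - η • v)‖ ^ 2 : ℝ) : EReal)) :
    ((F (x + γ • (xt - x)) : ℝ) : EReal) + Ψ (x + γ • (xt - x)) ≤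
      ((F x - (γ / η - L * γ ^ 2) * ‖xt - x‖ ^ 2 +
          (1 / (2 * L)) * ‖gradient F x - v‖ ^ 2 : ℝ) : EReal) + Ψ x :=
  npag_descent_lemma_general d F Ψ L η γ hL hη hγ0 hγ1 hF hFlip hne_bot hconv x v xt hx hxt
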